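/- Let V carry a symmetric bilinear form B, let α, β ∈ V with B(α,α) = B(β,β) = 2 and B(α,β) = 0, and let γ ∈ V with B(γ,γ) = 2 and B(α,γ) = ε where ε = ±1. Then, acting diagonally on V ⊗ V, s_γ(α ∨ β) = (α ∨ β) + s_α s_γ(α ∨ β) = (α ∨ β) − ε·(γ ∨ s_α s_γ(β)). -/
import Mathlib


open scoped TensorProduct

/-- The reflection `v ↦ v - B(γ,v) • γ` associated to a vector `γ`. -/
noncomputable def reflOf {F V : Type*} [Field F] [AddCommGroup V] [Module F V]
    (B : LinearMap.BilinForm F V) (γ : V) : V →ₗ[F] V :=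
  LinearMap.id - (B γ).smulRight γ

theorem reflection_on_two_root_pm_one {F V : Type*} [Field F] [AddCommGroup V] [Module F V]
    (B : LinearMap.BilinForm F V) (hsymm : ∀ u v : V, B u v = B v u)
    (α β γ : V) (hα : B α α = 2) (hβ : B β β = 2) (horth : B α β = 0) (hγ : B γ γ = 2)
    (ε : F) (hε : ε = 1 ∨ ε = -1) (hαγ : B α γ = ε) :
    TensorProduct.map (reflOf B γ) (reflOf B γ) (α ⊗ₜ[F] β + β ⊗ₜ[F] α)
      = (α ⊗ₜ[F] β + β ⊗ₜ[F] α)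
        + TensorProduct.map (reflOf B α ∘ₗ reflOf B γ) (reflOf B α ∘ₗ reflOf B γ)
            (α ⊗ₜ[F] β + β ⊗ₜ[F] α) ∧
    TensorProduct.map (reflOf B γ) (reflOf B γ) (α ⊗ₜ[F] β + β ⊗ₜ[F] α)
      = (α ⊗ₜ[F] β + β ⊗ₜ[F] α)
        - ε • (γ ⊗ₜ[F] (reflOf B α (reflOf B γ β)) + (reflOf B α (reflOf B γ β)) ⊗ₜ[F] γ) := by
    rcases hε with h | h <;> subst h <;>
  [skip; skip] <;> {
    have hγα : B γ α = B α γ := hsymm γ α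
    have hγβ : B γ β = B β γ := hsymm γ β
    have hβα : B β α = 0 := (hsymm β α).trans horth
    simp only [map_add, TensorProduct.map_tmul, reflOf, LinearMap.sub_apply, LinearMap.id_apply,
      LinearMap.smulRight_apply, LinearMap.coe_comp, Function.comp_apply, map_sub, map_smul,
      hα, hβ, horth, hγ, hαγ, hγα, hγβ, hβα, smul_sub, smul_smul,
      TensorProduct.tmul_sub, TensorProduct.sub_tmul, TensorProduct.smul_tmul,
      TensorProduct.tmul_smul, TensorProduct.tmul_add, TensorProduct.add_tmul]
    constructor <;> module }
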